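/- arXiv:2412.17976 — 7 statements merged into one kernel-verified Lean document; each statement's English description precedes it below -/
import Mathlib

section
/- Let Ω be a finite set and let G be a subgroup of the symmetric group on Ω. Let G₀ be the set of elements of G of odd prime order, and let 𝒮 be the set of ordered pairs (g, Γ) with g ∈ G₀, Γ ⊆ Ω, and g(Γ) = Γ. If |𝒮| < 2^|Ω|, then there exists a subset Γ of Ω whose setwise stabilizer in G is a 2-group. -/
open Pointwise

/-- Lemma 2.1(2): if the number of pairs `(g, Γ)` with `g ∈ G` of odd prime order
stabilizing `Γ ⊆ Ω` is less than `2 ^ |Ω|`, then some subset of `Ω` has a 2-group as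
setwise stabilizer in `G`. -/
theorem stmt_4 {Ω : Type*} [Fintype Ω] (G : Subgroup (Equiv.Perm Ω))
    (S : Set (G × Set Ω))
    (hS : S = {x : G × Set Ω |
      (∃ p : ℕ, p.Prime ∧ p ≠ 2 ∧ orderOf x.1 = p) ∧ x.1 • x.2 = x.2})
    (hlt : S.ncard < 2 ^ Fintype.card Ω) :
    ∃ Γ : Set Ω, IsPGroup 2 (MulAction.stabilizer G Γ) := by
  classical
  by_contra hcon
  push_neg at hcon
  have key : ∀ Γ : Set Ω, ∃ g : G, ((g, Γ) ∈ S) := by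
    intro Γ
    have h := hcon Γ
    rw [IsPGroup] at h
    push_neg at h
    obtain ⟨g, hg⟩ := h
    have hord : orderOf g ≠ 0 := (orderOf_pos g).ne'
    -- orderOf g has an odd prime factor
    have hodd : ∃ p : ℕ, p.Prime ∧ p ≠ 2 ∧ p ∣ orderOf g := by
      by_contra hc
      push_neg at hc
      have h2 : ∀ {d : ℕ}, d.Prime → d ∣ orderOf g → d = 2 := by
        intro d hd hdvd
        by_contra hd2
        exact (hc d hd hd2) hdvd
      have := Nat.eq_prime_pow_of_unique_prime_dvd hord h2
      exact hg _ (by rw [← this]; exact pow_orderOf_eq_one g)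
    obtain ⟨p, hp, hp2, hpdvd⟩ := hodd
    set h := g ^ (orderOf g / p) with hh
    have hho : orderOf h = p := orderOf_pow_orderOf_div hord hpdvd
    refine ⟨(h : G), ?_⟩
    rw [hS]
    refine ⟨⟨p, hp, hp2, ?_⟩, ?_⟩
    · rw [orderOf_submonoid, hho]
    · have := h.2
      rwa [MulAction.mem_stabilizer_iff] at this
  choose f hf using key
  set F : Set Ω → G × Set Ω := fun Γ => (f Γ, Γ) with hF
  have hFinj : Function.Injective F := by
    intro a b hab
    simpa [hF] using congrArg Prod.snd hab
  have hrange : Set.range F ⊆ S := by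
    rintro x ⟨Γ, rfl⟩
    exact hf Γ
  have hle : (2 : ℕ) ^ Fintype.card Ω ≤ S.ncard := by
    calc (2 : ℕ) ^ Fintype.card Ω = Nat.card (Set Ω) := by
            simp [Nat.card_eq_fintype_card]
      _ = (Set.range F).ncard := by
            rw [← Nat.card_coe_set_eq, Nat.card_range_of_injective hFinj]
      _ ≤ S.ncard := Set.ncard_le_ncard hrange (Set.toFinite S)
  omega
end

section
/- Let Ω be a finite set with |Ω| > 9 and let G be a subgroup of the symmetric group on Ω. Let G₀ be the set of elements of G of odd prime order, and let 𝒮 be the set of ordered pairs (g, Γ) with g ∈ G₀, Γ ⊆ Ω, and g(Γ) = Γ. If |𝒮| < 2^(|Ω|−1), then there exist subsets Δ₁, Δ₂ of Ω with |Δ₁| < |Δ₂| and 2|Δ₂| ≤ |Ω| whose setwise stabilizers in G are both 2-groups; in particular (G, Ω) is nice. -/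
open Pointwise

-- central binomial bound
lemma aux_choose : ∀ n : ℕ, 10 ≤ n → n.choose (n / 2) ≤ 2 ^ (n - 2) := by
  intro n hn
  induction n, hn using Nat.le_induction with
  | base => decide
  | succ n hn ih =>
    have h1 : (n + 1).choose ((n + 1) / 2) ≤ n.choose (n/2) + n.choose (n/2) := by
      rcases Nat.eq_zero_or_pos ((n+1)/2) with h | h
      · omega
      · obtain ⟨m, hm⟩ := Nat.exists_eq_add_of_le h
        calc (n+1).choose ((n+1)/2) = n.choose (((n+1)/2) - 1) + n.choose ((n+1)/2) := by
              rw [show (n+1)/2 = ((n+1)/2 - 1) + 1 by omega, Nat.choose_succ_succ']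
              simp
          _ ≤ n.choose (n/2) + n.choose (n/2) :=
              Nat.add_le_add (Nat.choose_le_middle _ _) (Nat.choose_le_middle _ _)
    calc (n + 1).choose ((n + 1) / 2) ≤ n.choose (n/2) + n.choose (n/2) := h1
      _ ≤ 2 ^ (n-2) + 2 ^ (n-2) := Nat.add_le_add ih ih
      _ = 2 ^ (n+1-2) := by rw [← two_mul, ← pow_succ']; congr 1; omega

-- odd prime divisor
lemma aux_odd_prime {m : ℕ} (hm : m ≠ 0) (h : ¬∃ k, m = 2 ^ k) :
    ∃ p : ℕ, p.Prime ∧ p ≠ 2 ∧ p ∣ m := by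
  by_contra hc
  push_neg at hc
  exact h ⟨m.primeFactorsList.length, Nat.eq_prime_pow_of_unique_prime_dvd hm
    (fun {d} hd hdvd => by_contra fun hne => (hc d hd hne) hdvd)⟩

-- number of k-element subsets
lemma aux_count {Ω : Type*} [Fintype Ω] (k : ℕ) :
    {Γ : Set Ω | Γ.ncard = k}.ncard ≤ (Fintype.card Ω).choose k := by
  classical
  have := Set.ncard_le_ncard_of_injOn (fun Γ : Set Ω => Γ.toFinset)
    (s := {Γ : Set Ω | Γ.ncard = k}) (t := ↑(Finset.univ.powersetCard k (α := Ω)))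
    (by
      intro Γ hΓ
      simp only [Finset.mem_coe, Finset.mem_powersetCard]
      exact ⟨Finset.subset_univ _, by rw [← hΓ, Set.ncard_eq_toFinset_card']⟩)
    (by
      intro a ha b hb hab
      simpa using congrArg (fun f : Finset Ω => (f : Set Ω)) hab)
    (Finset.finite_toSet _)
  calc {Γ : Set Ω | Γ.ncard = k}.ncard ≤ (↑(Finset.univ.powersetCard k (α := Ω)) : Set (Finset Ω)).ncard := this
    _ = (Fintype.card Ω).choose k := by
        rw [Set.ncard_coe_finset, Finset.card_powersetCard, Finset.card_univ]

lemma aux_stab {Ω : Type*} [Fintype Ω] (G : Subgroup (Equiv.Perm Ω))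
    (Δ : Set Ω) (hΔ : ∀ g : G, (∃ p : ℕ, p.Prime ∧ p ≠ 2 ∧ orderOf g = p) → ¬ g • Δ = Δ) :
    IsPGroup 2 (MulAction.stabilizer G Δ) := by
  intro x
  have hx : orderOf x ≠ 0 := by
    have : Finite (MulAction.stabilizer G Δ) := by infer_instance
    exact (orderOf_pos x).ne'
  by_cases hpow : ∃ k, orderOf x = 2 ^ k
  · obtain ⟨k, hk⟩ := hpow
    exact ⟨k, by rw [← hk]; exact pow_orderOf_eq_one x⟩
  · exfalso
    obtain ⟨p, hp, hp2, hpd⟩ := aux_odd_prime hx hpow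
    set g : G := (x : G) ^ (orderOf x / p) with hg
    have hxo : orderOf (x : G) = orderOf x :=
      orderOf_injective (MulAction.stabilizer G Δ).subtype Subtype.coe_injective x
    have hdvd : orderOf x / p ∣ orderOf x := Nat.div_dvd_of_dvd hpd
    have horder : orderOf g = p := by
      rw [hg, orderOf_pow, hxo, Nat.gcd_eq_right hdvd, Nat.div_div_self hpd hx]
    have hstab : g • Δ = Δ := by
      have : g ∈ MulAction.stabilizer G Δ := by
        rw [hg]
        exact pow_mem x.2 _
      exact this
    exact hΔ g ⟨p, hp, hp2, horder⟩ hstab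

/-- Lemma 2.1(3): if `|Ω| > 9` and the number of pairs `(g, Γ)` with `g ∈ G` of odd prime
order stabilizing `Γ ⊆ Ω` is less than `2 ^ (|Ω| - 1)`, then there are subsets
`Δ₁, Δ₂ ⊆ Ω` with `|Δ₁| < |Δ₂| ≤ |Ω|/2` whose setwise stabilizers in `G` are both
2-groups (in particular, `(G, Ω)` is nice). -/
theorem stmt_5 {Ω : Type*} [Fintype Ω] (G : Subgroup (Equiv.Perm Ω))
    (hcard : 9 < Fintype.card Ω)
    (S : Set (G × Set Ω))
    (hS : S = {x : G × Set Ω |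
      (∃ p : ℕ, p.Prime ∧ p ≠ 2 ∧ orderOf x.1 = p) ∧ x.1 • x.2 = x.2})
    (hlt : S.ncard < 2 ^ (Fintype.card Ω - 1)) :
    ∃ Δ₁ Δ₂ : Set Ω, Δ₁.ncard < Δ₂.ncard ∧ 2 * Δ₂.ncard ≤ Fintype.card Ω ∧
      IsPGroup 2 (MulAction.stabilizer G Δ₁) ∧
      IsPGroup 2 (MulAction.stabilizer G Δ₂) := by
  classical
  set n := Fintype.card Ω with hn
  set Bad : Set (Set Ω) := Prod.snd '' S with hBad
  have hSfin : S.Finite := Set.toFinite S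
  have hBadcard : Bad.ncard ≤ S.ncard := Set.ncard_image_le hSfin
  have hcompl_tot : Bad.ncard + Badᶜ.ncard = 2 ^ n := by
    rw [Set.ncard_add_ncard_compl, Nat.card_eq_fintype_card, Fintype.card_set]
  have h2n : (2:ℕ) ^ (n-1) + 2 ^ (n-1) = 2 ^ n := by
    rw [← two_mul, ← pow_succ']; congr 1; omega
  have hGoodlt : 2 ^ (n-1) < Badᶜ.ncard := by omega
  -- good property
  have hgoodprop : ∀ Γ ∉ Bad, ∀ g : G,
      (∃ p : ℕ, p.Prime ∧ p ≠ 2 ∧ orderOf g = p) → ¬ g • Γ = Γ := by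
    intro Γ hΓ g hgp hst
    exact hΓ ⟨(g, Γ), by rw [hS]; exact ⟨hgp, hst⟩, rfl⟩
  have hcompl : ∀ Γ : Set Ω, Γ ∉ Bad → Γᶜ ∉ Bad := by
    intro Γ hΓ hc
    obtain ⟨⟨g, Γ'⟩, hmem, hsnd⟩ := hc
    simp only at hsnd
    subst hsnd
    rw [hS] at hmem
    obtain ⟨hgp, hst⟩ := hmem
    apply hgoodprop Γ hΓ g hgp
    have : (g • Γ)ᶜ = Γᶜ := by rw [← Set.smul_set_compl]; exact hst
    exact compl_injective this
  have hnΓ : ∀ Γ : Set Ω, Γ.ncard + Γᶜ.ncard = n := by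
    intro Γ
    rw [Set.ncard_add_ncard_compl, Nat.card_eq_fintype_card]
  set f : Set Ω → ℕ := fun Γ => min Γ.ncard (n - Γ.ncard) with hf
  have hexists : ∃ Γ₁ ∈ Badᶜ, ∃ Γ₂ ∈ Badᶜ, f Γ₁ ≠ f Γ₂ := by
    by_contra hcon
    push_neg at hcon
    have hne : Badᶜ.Nonempty := Set.nonempty_of_ncard_ne_zero (by omega)
    obtain ⟨Γ₀, hΓ₀⟩ := hne
    set k := f Γ₀ with hk
    have hsub : Badᶜ ⊆ {Γ : Set Ω | Γ.ncard = k} ∪ {Γ : Set Ω | Γ.ncard = n - k} := by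
      intro Γ hΓ
      have heq := hcon Γ hΓ Γ₀ hΓ₀
      have hle := hnΓ Γ
      have hle0 := hnΓ Γ₀
      simp only [Set.mem_union, Set.mem_setOf_eq]
      simp only [hk, hf] at heq ⊢
      omega
    have hub : Badᶜ.ncard ≤ n.choose k + n.choose (n - k) := by
      calc Badᶜ.ncard ≤ ({Γ : Set Ω | Γ.ncard = k} ∪ {Γ : Set Ω | Γ.ncard = n - k}).ncard :=
            Set.ncard_le_ncard hsub (Set.toFinite _)
        _ ≤ {Γ : Set Ω | Γ.ncard = k}.ncard + {Γ : Set Ω | Γ.ncard = n - k}.ncard :=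
            Set.ncard_union_le _ _
        _ ≤ n.choose k + n.choose (n - k) := Nat.add_le_add (aux_count k) (aux_count (n - k))
    have hm1 : n.choose k ≤ n.choose (n / 2) := Nat.choose_le_middle _ _
    have hm2 : n.choose (n - k) ≤ n.choose (n / 2) := Nat.choose_le_middle _ _
    have hch := aux_choose n (by omega)
    have h2n2 : (2:ℕ) ^ (n-2) + 2 ^ (n-2) = 2 ^ (n-1) := by
      rw [← two_mul, ← pow_succ']; congr 1; omega
    omega
  obtain ⟨Γ₁, h1, Γ₂, h2, hne⟩ := hexists
  have hpick : ∀ Γ ∈ Badᶜ, ∃ Δ : Set Ω, Δ ∉ Bad ∧ Δ.ncard = f Γ := by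
    intro Γ hΓ
    rcases le_total Γ.ncard (n - Γ.ncard) with h | h
    · exact ⟨Γ, hΓ, (min_eq_left h).symm⟩
    · refine ⟨Γᶜ, hcompl Γ hΓ, ?_⟩
      have := hnΓ Γ
      simp only [hf]
      omega
  have hbound : ∀ Γ : Set Ω, 2 * f Γ ≤ n := by
    intro Γ
    have := hnΓ Γ
    simp only [hf]
    omega
  have key : ∀ Γa ∈ Badᶜ, ∀ Γb ∈ Badᶜ, f Γa < f Γb →
      ∃ Δ₁ Δ₂ : Set Ω, Δ₁.ncard < Δ₂.ncard ∧ 2 * Δ₂.ncard ≤ n ∧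
        IsPGroup 2 (MulAction.stabilizer G Δ₁) ∧
        IsPGroup 2 (MulAction.stabilizer G Δ₂) := by
    intro Γa ha Γb hb hab
    obtain ⟨Δ₁, hΔ₁, hc₁⟩ := hpick Γa ha
    obtain ⟨Δ₂, hΔ₂, hc₂⟩ := hpick Γb hb
    refine ⟨Δ₁, Δ₂, by omega, by rw [hc₂]; exact hbound Γb,
      aux_stab G Δ₁ (hgoodprop Δ₁ hΔ₁), aux_stab G Δ₂ (hgoodprop Δ₂ hΔ₂)⟩
  rcases lt_or_gt_of_ne hne with h | h
  · exact key Γ₁ h1 Γ₂ h2 h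
  · exact key Γ₂ h2 Γ₁ h1 h
end

section
/- Let Ω be a finite set and let G be a solvable subgroup of the symmetric group on Ω acting primitively on Ω. If g ∈ G has odd prime order, then the number of cycles of g on Ω (that is, the number of orbits of the cyclic group ⟨g⟩ on Ω) is at most 5|Ω|/9. -/
/-!
A solvable primitive group `G` has a nontrivial abelian normal subgroup `A` (the last nontrivial
term of its derived series); `A` is transitive by primitivity, hence regular. If `g` fixes a
point `ω₀`, then `a ↦ a • ω₀` maps the centralizer `C_A(g)` onto the fixed points of `g`, and `g`
does not centralize `A`. Now `a ↦ a / (g a g⁻¹)` is an endomorphism of `A` with kernel `C_A(g)`,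
and its image cannot have order at most two because `g` has odd order; so `g` fixes at most
`|Ω| / 3` points. Burnside's lemma for `⟨g⟩` of prime order `p` gives
`p · #cycles = |Ω| + (p - 1) · #fixed points ≤ (p + 2) |Ω| / 3`, which is at most `5 p |Ω| / 9`.
-/

open MulAction

def IsPrimitivePermGroup (Ω : Type*) [Fintype Ω] (G : Subgroup (Equiv.Perm Ω)) : Prop :=
  MulAction.IsPretransitive G Ω ∧
    ∀ B : Set Ω, MulAction.IsBlock G B → MulAction.IsTrivialBlock B

theorem MulAut.three_mul_card_fixedPoints_le {A : Type*} [CommGroup A] [Finite A]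
    (φ : MulAut A) (hodd : Odd (orderOf φ)) (hφ : φ ≠ 1) :
    3 * Nat.card {a : A // φ a = a} ≤ Nat.card A := by
  set ψ : A →* A := MonoidHom.id A / φ.toMonoidHom
  have hψ (a : A) : ψ a = a / φ a := rfl
  have hker : Nat.card ψ.ker = Nat.card {a : A // φ a = a} :=
    Nat.card_congr <| Equiv.subtypeEquivRight fun a => by
      rw [MonoidHom.mem_ker, hψ, div_eq_one, eq_comm]
  have hcard : Nat.card A = Nat.card ψ.range * Nat.card ψ.ker := by
    rw [Subgroup.card_eq_card_quotient_mul_card_subgroup ψ.ker,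
      Nat.card_congr (QuotientGroup.quotientKerEquivRange ψ).toEquiv]
  suffices h3 : 3 ≤ Nat.card ψ.range by rw [hcard, ← hker]; exact Nat.mul_le_mul_right _ h3
  by_contra! hlt
  -- The range of `ψ` is `φ`-stable; having at most two elements, it is fixed pointwise by `φ`
  -- and has exponent two, which forces `φ ^ 2 = 1`.
  have hsq (a : A) : ψ a * ψ a = 1 := by
    have : orderOf (⟨ψ a, a, rfl⟩ : ψ.range) ∣ 2 := (orderOf_dvd_natCard _).trans <| by
      interval_cases h : Nat.card ψ.range
      · exact absurd h Nat.card_pos.ne'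
      all_goals norm_num
    simpa [← pow_two, Subtype.ext_iff] using orderOf_dvd_iff_pow_eq_one.mp this
  have hfix (a : A) : φ (ψ a) = ψ a := by
    by_cases h1 : ψ a = 1
    · rw [h1, map_one]
    have h2 : Nat.card ψ.range = 2 := by
      have : Nontrivial ψ.range := ⟨⟨⟨ψ a, a, rfl⟩, 1, by simpa [Subtype.ext_iff] using h1⟩⟩
      have := Finite.one_lt_card_iff_nontrivial.mpr this
      omega
    obtain ⟨r, -, hr⟩ := (Nat.card_eq_two_iff' (1 : ψ.range)).mp h2
    have hφψ : φ (ψ a) = ψ (φ a) := by simp [hψ]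
    have e1 := hr ⟨ψ a, a, rfl⟩ (by simpa [Subtype.ext_iff] using h1)
    have e2 := hr ⟨φ (ψ a), φ a, hφψ.symm⟩ (by simpa [Subtype.ext_iff] using h1)
    simpa [Subtype.ext_iff] using e2.trans e1.symm
  have hφ2 : φ ^ 2 = 1 := by
    ext a
    have hφa : φ a = a / ψ a := by simp [hψ]
    calc (φ ^ 2) a = φ a / φ (ψ a) := by rw [pow_two, MulAut.mul_apply, hφa, map_div, ← hφa]
      _ = a / (ψ a * ψ a) := by rw [hfix, hφa, div_div]
      _ = a := by rw [hsq, div_one]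
  have h1 : orderOf φ = 1 :=
    (Nat.dvd_prime Nat.prime_two).mp (orderOf_dvd_of_pow_eq_one hφ2) |>.resolve_right
      fun h => absurd (h ▸ hodd) (by decide)
  exact hφ (orderOf_eq_one_iff.mp h1)

theorem Group.IsSolvable.exists_normal_isMulCommutative_ne_bot {G : Type*} [Group G]
    [IsSolvable G] [Nontrivial G] : ∃ A : Subgroup G, A.Normal ∧ IsMulCommutative A ∧ A ≠ ⊥ := by
  classical
  obtain ⟨n, hn⟩ := IsSolvable.solvable (G := G)
  have hex : ∃ k, derivedSeries G (k + 1) = ⊥ :=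
    ⟨n, le_bot_iff.mp (hn ▸ derivedSeries_antitone G n.le_succ)⟩
  refine ⟨derivedSeries G (Nat.find hex), derivedSeries_normal _ _, ?_, ?_⟩
  · rw [← Subgroup.le_centralizer_iff_isMulCommutative,
      ← Subgroup.commutator_eq_bot_iff_le_centralizer, ← derivedSeries_succ]
    exact Nat.find_spec hex
  · cases h : Nat.find hex with
    | zero => simp
    | succ j => exact Nat.find_min hex (h ▸ j.lt_succ_self)

theorem IsCancelSMul.of_isMulCommutative {A Ω : Type*} [Group A]
    [IsMulCommutative A] [MulAction A Ω] [FaithfulSMul A Ω] [IsPretransitive A Ω] :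
    IsCancelSMul A Ω :=
  isCancelSMul_iff_eq_one_of_smul_eq.mpr fun a x hx => eq_of_smul_eq_smul fun y => by
    obtain ⟨b, rfl⟩ := exists_smul_eq A x y
    rw [smul_smul, mul_comm', ← smul_smul, hx, one_smul]

theorem MulAut.conjNormal_smul_of_mem_fixedBy {G Ω : Type*} [Group G] [MulAction G Ω]
    {A : Subgroup G} [A.Normal] {g : G} {ω₀ : Ω} (hω₀ : ω₀ ∈ fixedBy Ω g) (a : A) :
    MulAut.conjNormal g a • ω₀ = g • a • ω₀ := by
  rw [Subgroup.smul_def, MulAut.conjNormal_apply, mul_smul, mul_smul,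
    inv_smul_eq_iff.mpr hω₀.symm]
  rfl

theorem card_fixedBy_le_card_fixedPoints_conjNormal {G Ω : Type*} [Group G] [MulAction G Ω]
    [Finite G] (A : Subgroup G) [A.Normal] [IsPretransitive A Ω] [IsCancelSMul A Ω] {g : G}
    {ω₀ : Ω} (hω₀ : ω₀ ∈ fixedBy Ω g) :
    Nat.card (fixedBy Ω g) ≤ Nat.card {a : A // MulAut.conjNormal g a = a} := by
  have hconj := MulAut.conjNormal_smul_of_mem_fixedBy (A := A) hω₀
  refine Nat.card_le_card_of_surjective
    (fun a => ⟨a.1 • ω₀, by rw [mem_fixedBy, ← hconj, a.2]⟩) fun ⟨ω, hω⟩ => ?_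
  obtain ⟨a, rfl⟩ := exists_smul_eq A ω₀ ω
  exact ⟨⟨a, IsCancelSMul.right_cancel _ _ ω₀ (by rw [hconj]; exact hω)⟩, rfl⟩

open Subgroup in
theorem card_orbitRel_quotient_zpowers_mul_prime {M Ω : Type*} [Group M] [MulAction M Ω]
    [Finite Ω] {σ : M} {p : ℕ} (hp : p.Prime) (hσ : orderOf σ = p) :
    Nat.card (orbitRel.Quotient (zpowers σ) Ω) * p =
      Nat.card Ω + (p - 1) * Nat.card (fixedBy Ω σ) := by
  classical
  have : Fact p.Prime := ⟨hp⟩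
  have hcard : Nat.card (zpowers σ) = p := by rw [Nat.card_zpowers, hσ]
  have hfix (a : zpowers σ) (ha : a ≠ 1) : fixedBy Ω a = fixedBy Ω σ := by
    obtain ⟨k, hk⟩ := mem_zpowers_iff.mp a.2
    obtain ⟨j, hj⟩ := mem_zpowers_iff.mp <|
      (zpowers_eq_top_of_prime_card hcard ha).symm ▸ mem_top (⟨σ, mem_zpowers σ⟩ : zpowers σ)
    ext ω
    refine ⟨fun h => ?_, fun h => ?_⟩
    · have hσa : (a : M) ^ j = σ := congrArg Subtype.val hj
      rw [← hσa]; exact mem_fixedBy_zpow (α := Ω) (g := (a : M)) h j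
    · show (a : M) • ω = ω
      rw [← hk]; exact mem_fixedBy_zpow h k
  have : Finite (zpowers σ) := Nat.finite_of_card_ne_zero (hcard ▸ hp.ne_zero)
  have : Fintype (zpowers σ) := Fintype.ofFinite _
  have : Fintype Ω := Fintype.ofFinite _
  have hburnside := sum_card_fixedBy_eq_card_orbits_mul_card_group (zpowers σ) Ω
  simp only [Fintype.card_eq_nat_card] at hburnside
  rw [← Finset.add_sum_erase _ _ (Finset.mem_univ 1),
    Finset.sum_congr rfl fun a ha => by rw [hfix a (Finset.ne_of_mem_erase ha)]] at hburnside
  rw [Finset.sum_const, Finset.card_erase_of_mem (Finset.mem_univ _), Finset.card_univ,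
    Fintype.card_eq_nat_card, hcard, fixedBy_one_eq_univ, Nat.card_univ, smul_eq_mul] at hburnside
  exact hburnside.symm

open scoped IsMulCommutative in
theorem MulAction.IsPreprimitive.three_mul_card_fixedBy_le {G Ω : Type*} [Group G]
    [MulAction G Ω] [Finite G] [FaithfulSMul G Ω] [IsPreprimitive G Ω] [Group.IsSolvable G]
    {g : G} (hg : g ≠ 1) (hodd : Odd (orderOf g)) : 3 * Nat.card (fixedBy Ω g) ≤ Nat.card Ω := by
  have : Nontrivial G := ⟨⟨g, 1, hg⟩⟩
  obtain ⟨A, hAn, hAc, hA⟩ := Group.IsSolvable.exists_normal_isMulCommutative_ne_bot (G := G)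
  rcases (fixedBy Ω g).eq_empty_or_nonempty with hF | ⟨ω₀, hω₀⟩
  · simp [hF]
  have hmoved : fixedPoints A Ω ≠ Set.univ := by
    intro h
    have htriv (a : A) : a = 1 := eq_of_smul_eq_smul (α := Ω) fun ω => by
      rw [one_smul]; exact (h ▸ Set.mem_univ ω : ω ∈ fixedPoints A Ω) a
    exact hA <| (Subgroup.eq_bot_iff_forall A).mpr fun a ha =>
      congrArg Subtype.val (htriv ⟨a, ha⟩)
  have : IsPretransitive A Ω := IsQuasiPreprimitive.isPretransitive_of_normal hmoved
  have : IsCancelSMul A Ω := IsCancelSMul.of_isMulCommutative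
  have hcard : Nat.card A = Nat.card Ω := by
    rw [← Subgroup.index_bot, ← IsCancelSMul.stabilizer_eq_bot ω₀, index_stabilizer_of_transitive]
  have hφ : MulAut.conjNormal g (H := A) ≠ 1 := by
    intro h
    refine hg (eq_of_smul_eq_smul (α := Ω) fun ω => ?_)
    obtain ⟨a, rfl⟩ := MulAction.exists_smul_eq A ω₀ ω
    rw [← MulAut.conjNormal_smul_of_mem_fixedBy hω₀, h, one_smul, MulAut.one_apply]
  have hφodd : Odd (orderOf (MulAut.conjNormal g (H := A))) :=
    Odd.of_dvd_nat hodd (orderOf_map_dvd _ g)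
  calc 3 * Nat.card (fixedBy Ω g)
      ≤ 3 * Nat.card {a : A // MulAut.conjNormal g a = a} :=
        Nat.mul_le_mul_left 3 (card_fixedBy_le_card_fixedPoints_conjNormal A hω₀)
    _ ≤ Nat.card A := MulAut.three_mul_card_fixedPoints_le _ hφodd hφ
    _ = Nat.card Ω := hcard

theorem nine_mul_le_five_mul_of_mul_eq {c n f p : ℕ} (hp : 3 ≤ p) (hf : 3 * f ≤ n)
    (h : c * p = n + (p - 1) * f) : 9 * c ≤ 5 * n := by
  obtain ⟨r, rfl⟩ : ∃ r, p = r + 1 := ⟨p - 1, by omega⟩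
  rw [Nat.add_sub_cancel] at h
  refine Nat.le_of_mul_le_mul_right ?_ r.succ_pos
  nlinarith [Nat.mul_le_mul_left r hf, Nat.mul_le_mul_right n hp]

/-- The claim in the proof of Lemma 2.1: if `(G, Ω)` is primitive solvable and `g ∈ G` has
odd prime order, then `g` has at most `5|Ω|/9` cycles on `Ω`. -/
theorem stmt_6 {Ω : Type*} [Fintype Ω] (G : Subgroup (Equiv.Perm Ω))
    (hsolv : IsSolvable G) (hprim : IsPrimitivePermGroup Ω G)
    (g : G) (hg : ∃ p : ℕ, p.Prime ∧ p ≠ 2 ∧ orderOf g = p) :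
    (Nat.card (MulAction.orbitRel.Quotient (Subgroup.zpowers (g : Equiv.Perm Ω)) Ω) : ℝ) ≤
      5 * (Fintype.card Ω : ℝ) / 9 := by
  obtain ⟨p, hp, hp2, hgp⟩ := hg
  have : Group.IsSolvable G := hsolv
  have : IsPreprimitive G Ω := { hprim.1 with isTrivialBlock_of_isBlock := hprim.2 _ }
  have hfix : 3 * Nat.card (fixedBy Ω g) ≤ Nat.card Ω :=
    IsPreprimitive.three_mul_card_fixedBy_le (fun h => hp.ne_one (by rw [← hgp, h, orderOf_one]))
      (hgp ▸ hp.odd_of_ne_two hp2)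
  have horbits := card_orbitRel_quotient_zpowers_mul_prime (Ω := Ω) hp
    (σ := (g : Equiv.Perm Ω)) (by rw [Subgroup.orderOf_coe, hgp])
  have hbound := nine_mul_le_five_mul_of_mul_eq (hp.two_le.lt_of_ne hp2.symm) hfix horbits
  rw [le_div_iff₀ (by norm_num), ← Nat.card_eq_fintype_card, mul_comm]
  exact_mod_cast hbound
end

section
/- Let Ω be a finite set whose cardinality is a prime number p ≥ 5, and let G be a solvable subgroup of the symmetric group on Ω acting primitively on Ω. Then (G, Ω) is nice: there exist subsets Δ₁, Δ₂ of Ω with |Δ₁| < |Δ₂| and 2|Δ₂| ≤ |Ω| such that for j = 1, 2, the setwise stabilizer of Δ_j in G has a normal elementary abelian 3-subgroup (possibly trivial) with 2-group quotient. -/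
open Pointwise

/-- A finite group `S` has the "required structure" if it has a (possibly trivial) normal
elementary abelian 3-subgroup `N` such that the quotient `S/N` is a 2-group. -/
def RequiredStructure (S : Type*) [Group S] : Prop :=
  ∃ (N : Subgroup S) (hN : N.Normal),
    (∀ x ∈ N, ∀ y ∈ N, x * y = y * x) ∧ (∀ x ∈ N, x ^ 3 = 1) ∧
    @IsPGroup 2 (S ⧸ N) (@QuotientGroup.Quotient.group S _ N hN)

/-- A finite permutation group `(G, Ω)` is "nice" if there are subsets `Δ₁, Δ₂` of `Ω`
with `|Δ₁| < |Δ₂| ≤ |Ω|/2` whose setwise stabilizers in `G` both have the required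
structure. -/
def IsNice (Ω : Type*) [Fintype Ω] (G : Subgroup (Equiv.Perm Ω)) : Prop :=
  ∃ Δ₁ Δ₂ : Set Ω, Δ₁.ncard < Δ₂.ncard ∧ 2 * Δ₂.ncard ≤ Fintype.card Ω ∧
    RequiredStructure (MulAction.stabilizer G Δ₁) ∧
    RequiredStructure (MulAction.stabilizer G Δ₂)

/-!
Every nontrivial element of `G` fixes at most one point. The last nontrivial term `A` of the
derived series is an abelian normal subgroup, hence transitive by primitivity and then regular of
order `p`. If `g` fixes `x` and `y` and `a ∈ A` maps `x` to `y`, then `g a g⁻¹ ∈ A` also maps `x`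
to `y`, so `g` commutes with `a` by regularity; as `a` generates `A`, `g` centralizes the
transitive group `A` and fixes every point.

Hence the setwise stabilizer of a set of two or three points embeds into `S₂` or `S₃`, and for
`p = 5` a point stabilizer acts semiregularly on the remaining four points, so it is a `2`-group.
Take `(|Δ₁|, |Δ₂|) = (1, 2)` if `p = 5` and `(2, 3)` if `p > 5`.
-/

open MulAction

theorem requiredStructure_of_isPGroup_two {S : Type*} [Group S] (h : IsPGroup 2 S) :
    RequiredStructure S := by
  refine ⟨⊥, inferInstance, ?_, ?_, h.to_quotient ⊥⟩
  · rintro x hx y hy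
    rw [Subgroup.mem_bot.mp hx, Subgroup.mem_bot.mp hy]
  · rintro x hx
    rw [Subgroup.mem_bot.mp hx, one_pow]

theorem RequiredStructure.of_injective {S T : Type*} [Group S] [Group T] {π : S →* T}
    (hπ : Function.Injective π) (hT : RequiredStructure T) : RequiredStructure S := by
  obtain ⟨N, hN, hcomm, hexp, hquot⟩ := hT
  refine ⟨N.comap π, inferInstance, fun x hx y hy => hπ ?_, fun x hx => hπ ?_, fun q => ?_⟩
  · simpa only [map_mul] using hcomm _ hx _ hy
  · simpa only [map_pow, map_one] using hexp _ hx
  · induction q using QuotientGroup.induction_on with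
    | H s =>
      obtain ⟨k, hk⟩ := hquot (π s)
      refine ⟨k, ?_⟩
      rw [← QuotientGroup.mk_pow, QuotientGroup.eq_one_iff] at hk ⊢
      rwa [Subgroup.mem_comap, map_pow]

/-- For `|α| ≤ 3` take `N = A_α`, which is trivial or of order `3`. -/
theorem requiredStructure_perm_of_card_le_three {α : Type*} [Finite α] (hα : Nat.card α ≤ 3) :
    RequiredStructure (Equiv.Perm α) := by
  have := Fintype.ofFinite α
  classical
  have hcomm := alternatingGroup.isMulCommutative_of_card_le_three hα
  refine ⟨alternatingGroup α, inferInstance, fun x hx y hy => ?_, fun x hx => ?_, fun q => ?_⟩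
  · exact congrArg Subtype.val (hcomm.is_comm.comm ⟨x, hx⟩ ⟨y, hy⟩)
  · rcases hα.lt_or_eq with h2 | h3
    · rw [alternatingGroup.eq_bot_of_card_le_two (by omega)] at hx
      rw [Subgroup.mem_bot.mp hx, one_pow]
    · have : Nontrivial α := Finite.one_lt_card_iff_nontrivial.mp (by omega)
      have hcard : Nat.card (alternatingGroup α) = 3 := by
        rw [nat_card_alternatingGroup, h3]
        rfl
      have h := pow_card_eq_one' (x := (⟨x, hx⟩ : alternatingGroup α))
      rw [hcard] at h
      exact congrArg Subtype.val h
  · induction q using QuotientGroup.induction_on with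
    | H s =>
      refine ⟨1, ?_⟩
      rw [pow_one, ← QuotientGroup.mk_pow, QuotientGroup.eq_one_iff,
        Equiv.Perm.mem_alternatingGroup, map_pow, Int.units_sq]

theorem exists_normal_ne_bot_le_centralizer (G : Type*) [Group G] [Group.IsSolvable G]
    [Nontrivial G] : ∃ A : Subgroup G, A.Normal ∧ A ≠ ⊥ ∧ A ≤ Subgroup.centralizer A := by
  classical
  have hex : ∃ k, derivedSeries G (k + 1) = ⊥ := by
    obtain ⟨n, hn⟩ := ‹Group.IsSolvable G›
    exact ⟨n, eq_bot_iff.mpr (hn ▸ derivedSeries_antitone G n.le_succ)⟩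
  refine ⟨derivedSeries G (Nat.find hex), derivedSeries_normal _ _, ?_, ?_⟩
  · rcases h : Nat.find hex with _ | k
    · rw [derivedSeries_zero]
      exact top_ne_bot
    · exact Nat.find_min hex (h ▸ k.lt_succ_self)
  · rw [← Subgroup.commutator_eq_bot_iff_le_centralizer, ← derivedSeries_succ]
    exact Nat.find_spec hex

section Action

variable {G X : Type*} [Group G] [MulAction G X]

/-- The fixed points of `b` form an `N`-invariant set. -/
theorem eq_one_of_mem_centralizer_of_smul_eq_self [FaithfulSMul G X] (N : Subgroup G)
    [IsPretransitive N X] {b : G} (hb : b ∈ Subgroup.centralizer N) {x : X} (hx : b • x = x) :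
    b = 1 := by
  refine eq_of_smul_eq_smul (α := X) fun z => ?_
  obtain ⟨n, rfl⟩ := exists_smul_eq N x z
  rw [one_smul, Subgroup.smul_def, ← mul_smul, ← Subgroup.mem_centralizer_iff.mp hb n n.2,
    mul_smul, hx]

theorem isPretransitive_of_normal_of_ne_bot [FaithfulSMul G X] [IsPreprimitive G X]
    {A : Subgroup G} [A.Normal] (hA : A ≠ ⊥) : IsPretransitive A X :=
  IsQuasiPreprimitive.isPretransitive_of_normal fun h => hA <|
    (Subgroup.eq_bot_iff_forall A).mpr fun a ha => eq_of_smul_eq_smul (α := X) fun z => by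
      rw [one_smul]
      exact mem_fixedPoints.mp (h ▸ Set.mem_univ z) ⟨a, ha⟩

theorem nat_card_eq_of_le_centralizer [FaithfulSMul G X] (A : Subgroup G) [IsPretransitive A X]
    (hA : A ≤ Subgroup.centralizer A) (x : X) : Nat.card A = Nat.card X := by
  have hstab : stabilizer A x = ⊥ := (Subgroup.eq_bot_iff_forall _).mpr fun b hb =>
    Subtype.ext (eq_one_of_mem_centralizer_of_smul_eq_self A (hA b.2) hb)
  rw [← index_stabilizer_of_transitive A x, hstab, Subgroup.index_bot]

theorem eq_one_of_smul_eq_self_of_isPretransitive_normal [FaithfulSMul G X] {A : Subgroup G}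
    [A.Normal] [IsPretransitive A X] (hA : A ≤ Subgroup.centralizer A)
    (hp : (Nat.card X).Prime) {g : G} {x y : X} (hx : g • x = x) (hy : g • y = y)
    (hxy : x ≠ y) : g = 1 := by
  have : Fact (Nat.card X).Prime := ⟨hp⟩
  obtain ⟨⟨a, haA⟩, hax⟩ := exists_smul_eq A x y
  have ha1 : (⟨a, haA⟩ : A) ≠ 1 := fun h1 => hxy (by rw [← hax, h1, one_smul])
  have hconj : (g * a * g⁻¹) • x = a • x := by
    rw [mul_smul, mul_smul, inv_smul_eq_iff.mpr hx.symm]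
    exact congrArg (g • ·) hax |>.trans (hy.trans hax.symm)
  have hga : Commute g a := by
    have hA_conj : g * a * g⁻¹ ∈ A := Subgroup.Normal.conj_mem ‹_› a haA g
    have h1 := eq_one_of_mem_centralizer_of_smul_eq_self A
      (hA (mul_mem (inv_mem hA_conj) haA)) (x := x) (by rw [mul_smul, ← hconj, inv_smul_smul])
    exact mul_inv_eq_iff_eq_mul.mp (inv_mul_eq_one.mp h1)
  refine eq_one_of_mem_centralizer_of_smul_eq_self A ?_ hx
  refine Subgroup.mem_centralizer_iff.mpr fun b hb => ?_
  obtain ⟨k, hk⟩ := Subgroup.mem_zpowers_iff.mp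
    (mem_zpowers_of_prime_card (nat_card_eq_of_le_centralizer A hA x) ha1 (g' := ⟨b, hb⟩))
  have hb' : a ^ k = b := congrArg Subtype.val hk
  rw [← hb']
  exact (hga.zpow_right k).eq.symm

theorem eq_one_of_smul_eq_self_of_smul_eq_self [FaithfulSMul G X] [Group.IsSolvable G]
    [IsPretransitive G X] (hp : (Nat.card X).Prime) {g : G} {x y : X} (hx : g • x = x)
    (hy : g • y = y) (hxy : x ≠ y) : g = 1 := by
  have : IsPreprimitive G X := .of_prime_card hp
  have : Nontrivial G := by
    obtain ⟨h, hh⟩ := exists_smul_eq G x y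
    exact ⟨⟨h, 1, fun h1 => hxy (by rw [← hh, h1, one_smul])⟩⟩
  obtain ⟨A, hAn, hA, hAab⟩ := exists_normal_ne_bot_le_centralizer G
  have : IsPretransitive A X := isPretransitive_of_normal_of_ne_bot hA
  exact eq_one_of_smul_eq_self_of_isPretransitive_normal hAab hp hx hy hxy

theorem toPermHom_stabilizer_injective
    (hfix : ∀ g : G, ∀ u v : X, g • u = u → g • v = v → u ≠ v → g = 1)
    {Δ : Set X} (hΔ : Δ.Nontrivial) : Function.Injective (toPermHom (stabilizer G Δ) Δ) := by
  obtain ⟨u, hu, v, hv, huv⟩ := hΔ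
  refine (injective_iff_map_eq_one _).mpr fun s hs => Subtype.ext (hfix s u v ?_ ?_ huv)
  · exact congrArg Subtype.val (Equiv.ext_iff.mp hs ⟨u, hu⟩)
  · exact congrArg Subtype.val (Equiv.ext_iff.mp hs ⟨v, hv⟩)

theorem requiredStructure_stabilizer_of_ncard_le_three [Finite X]
    (hfix : ∀ g : G, ∀ u v : X, g • u = u → g • v = v → u ≠ v → g = 1)
    {Δ : Set X} (h2 : 2 ≤ Δ.ncard) (h3 : Δ.ncard ≤ 3) : RequiredStructure (stabilizer G Δ) :=
  (requiredStructure_perm_of_card_le_three (by rwa [Nat.card_coe_set_eq])).of_injective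
    (toPermHom_stabilizer_injective hfix (Set.one_lt_ncard_iff_nontrivial.mp h2))

/-- `g` has `x` as its only fixed point, and the number of fixed points of a permutation of
order `q` is congruent to the degree modulo `q`. -/
theorem card_modEq_one_of_orderOf_eq_prime [Fintype X]
    (hfix : ∀ g : G, ∀ u v : X, g • u = u → g • v = v → u ≠ v → g = 1)
    {g : G} {x : X} (hx : g • x = x) {q : ℕ} (hq : q.Prime) (hg : orderOf g = q) :
    Fintype.card X ≡ 1 [MOD q] := by
  classical
  have : Fact q.Prime := ⟨hq⟩
  have hfixed : (toPermHom G X g).supportᶜ = {x} := by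
    ext w
    simp only [Finset.mem_compl, Equiv.Perm.mem_support, not_not, Finset.mem_singleton,
      toPermHom_apply, toPerm_apply]
    refine ⟨fun hw => by_contra fun hwx => hq.one_lt.ne' ?_, fun hw => hw ▸ hx⟩
    rw [← hg, hfix g w x hw hx hwx, orderOf_one]
  have hpow : toPermHom G X g ^ q ^ 1 = 1 := by
    rw [pow_one, ← map_pow, ← hg, pow_orderOf_eq_one, map_one]
  have hmod := (Equiv.Perm.card_compl_support_modEq hpow).symm
  rwa [hfixed, Finset.card_singleton] at hmod

theorem isPGroup_two_stabilizer_of_card_eq_five [Finite G] [Fintype X]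
    (hfix : ∀ g : G, ∀ u v : X, g • u = u → g • v = v → u ≠ v → g = 1)
    (h5 : Fintype.card X = 5) (x : X) : IsPGroup 2 (stabilizer G x) := by
  rw [isPGroup_iff_primeFactors_card_subset two_ne_zero, Nat.prime_two.primeFactors]
  intro q hq
  have hqp := Nat.prime_of_mem_primeFactors hq
  have : Fact q.Prime := ⟨hqp⟩
  obtain ⟨s, hs⟩ := exists_prime_orderOf_dvd_card' q (Nat.dvd_of_mem_primeFactors hq)
  have hmod := card_modEq_one_of_orderOf_eq_prime hfix s.2 hqp
    (by rw [Subgroup.orderOf_coe, hs])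
  rw [h5] at hmod
  have hq4 : q ∣ 2 ^ 2 := (Nat.modEq_iff_dvd' (by norm_num)).mp hmod.symm
  exact Finset.mem_singleton.mpr ((Nat.prime_dvd_prime_iff_eq hqp Nat.prime_two).mp
    (hqp.dvd_of_dvd_pow hq4))

end Action

/-- Lemma 2.4: a primitive solvable permutation group of prime degree `p ≥ 5` is nice. -/
theorem stmt_12 {Ω : Type*} [Fintype Ω] (G : Subgroup (Equiv.Perm Ω))
    (hsolv : IsSolvable G) (hprim : IsPrimitivePermGroup Ω G)
    (p : ℕ) (hp : p.Prime) (hp5 : 5 ≤ p) (hcard : Fintype.card Ω = p) :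
    IsNice Ω G := by
  have := hprim.1
  have : Group.IsSolvable G := hsolv
  have hfix : ∀ g : G, ∀ u v : Ω, g • u = u → g • v = v → u ≠ v → g = 1 := fun _ _ _ =>
    eq_one_of_smul_eq_self_of_smul_eq_self (by rwa [Nat.card_eq_fintype_card, hcard])
  have hsubset : ∀ n ≤ p, ∃ Δ : Set Ω, Δ.ncard = n := fun n hn => by
    obtain ⟨Δ, -, hΔ⟩ := Set.exists_subset_card_eq (s := (Set.univ : Set Ω)) (n := n)
      (by rwa [Set.ncard_univ, Nat.card_eq_fintype_card, hcard])
    exact ⟨Δ, hΔ⟩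
  rcases hp5.eq_or_lt with rfl | h6
  · obtain ⟨Δ₁, h1⟩ := hsubset 1 (by omega)
    obtain ⟨Δ₂, h2⟩ := hsubset 2 (by omega)
    obtain ⟨x, rfl⟩ := Set.ncard_eq_one.mp h1
    refine ⟨{x}, Δ₂, by omega, by omega, ?_,
      requiredStructure_stabilizer_of_ncard_le_three hfix (by omega) (by omega)⟩
    rw [stabilizer_singleton]
    exact requiredStructure_of_isPGroup_two (isPGroup_two_stabilizer_of_card_eq_five hfix hcard x)
  · obtain ⟨Δ₁, h1⟩ := hsubset 2 (by omega)
    obtain ⟨Δ₂, h2⟩ := hsubset 3 (by omega)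
    exact ⟨Δ₁, Δ₂, by omega, by omega,
      requiredStructure_stabilizer_of_ncard_le_three hfix (by omega) (by omega),
      requiredStructure_stabilizer_of_ncard_le_three hfix (by omega) (by omega)⟩
end

section
/- Let Ω be a finite set with |Ω| = 7 or |Ω| = 8, and let G be a solvable subgroup of the symmetric group on Ω acting primitively on Ω. Then for every 3-element subset Δ of Ω, no nonidentity element of G fixes Δ pointwise; that is, the pointwise stabilizer of Δ in G is trivial. -/
/-!
A minimal normal subgroup of a finite solvable group is an abelian `p`-group, so the solvable
primitive group `G` has an abelian normal subgroup `M ≠ 1`; it is transitive, hence regular.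

Key observation: if `g` normalizes a subgroup `C` of prime order acting regularly on the orbit
`C • y`, and `g` fixes `y` and one more point `c • y` of it, then `g c g⁻¹` and `c` agree at `y`,
so `g` commutes with the generator `c` and fixes `C • y` pointwise.

In prime degree apply this to `C = M`. In degree `p + 1`, let `A` be a minimal normal subgroup of
the point stabilizer `G_x`, an abelian `q`-group. Since `G = M G_x` with `M` abelian, `C_M(A)` is
normal in `G`; were it nontrivial it would be transitive, and `A`, commuting with it and fixing
`x`, would be trivial. So `C_M(A) = 1`, and since under `m ↦ m • x` the fixed points of `A`
correspond to `C_M(A)`, `A` fixes only `x`. Counting fixed points modulo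
`q` gives `q = p`, so `A` is regular on the remaining `p` points and the observation applies to
`C = A`.
-/

namespace Subgroup

variable {G : Type*} [Group G]

def IsMinimalNormal (M : Subgroup G) : Prop :=
  Minimal (fun N : Subgroup G => N.Normal ∧ N ≠ ⊥) M

theorem exists_isMinimalNormal [Finite G] [Nontrivial G] :
    ∃ M : Subgroup G, M.IsMinimalNormal :=
  exists_minimal_of_wellFoundedLT _ ⟨⊤, inferInstance, top_ne_bot⟩

theorem IsMinimalNormal.commute [Group.IsSolvable G] {M : Subgroup G} (hM : M.IsMinimalNormal) :
    ∀ a ∈ M, ∀ b ∈ M, Commute a b := by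
  have := hM.prop.1
  have hbot : ⁅M, M⁆ = ⊥ := by
    by_contra h
    exact hM.not_prop_of_lt (Group.IsSolvable.commutator_lt_of_ne_bot hM.prop.2)
      ⟨inferInstance, h⟩
  intro a ha b hb
  exact commutatorElement_eq_one_iff_commute.mp
    (mem_bot.mp (hbot ▸ commutator_mem_commutator ha hb))

theorem IsMinimalNormal.exists_isPGroup [Finite G] {M : Subgroup G} (hM : M.IsMinimalNormal)
    (hcomm : ∀ a ∈ M, ∀ b ∈ M, Commute a b) : ∃ p, p.Prime ∧ IsPGroup p M := by
  obtain ⟨hMn, hMbot⟩ := hM.prop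
  set p := (Nat.card M).minFac
  have hp : p.Prime := Nat.minFac_prime (card_eq_one.not.mpr hMbot)
  have := Fact.mk hp
  obtain ⟨P⟩ : Nonempty (Sylow p M) := inferInstance
  have hPn : (P : Subgroup M).Normal :=
    ⟨fun a _ b => by
      rwa [show b * a = a * b from Subtype.ext (hcomm _ b.2 _ a.2).eq, mul_inv_cancel_right]⟩
  have := P.characteristic_of_normal hPn
  have hPM : (P : Subgroup M).map M.subtype = M := by
    refine hM.eq_of_le ⟨inferInstance, ?_⟩ (map_subtype_le _)
    rw [Ne, map_eq_bot_iff_of_injective _ M.subtype_injective]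
    exact P.ne_bot_of_dvd_card (Nat.minFac_dvd _)
  refine ⟨p, hp, ?_⟩
  rw [← hPM]
  exact P.isPGroup'.map _

theorem exists_abelian_isPGroup_le_normalizer [Finite G] [Group.IsSolvable G] {H : Subgroup G}
    (hH : H ≠ ⊥) :
    ∃ A : Subgroup G, A ≠ ⊥ ∧ A ≤ H ∧ H ≤ normalizer (A : Set G) ∧
      (∀ a ∈ A, ∀ b ∈ A, Commute a b) ∧ ∃ p, p.Prime ∧ IsPGroup p A := by
  have : Nontrivial H := (nontrivial_iff_ne_bot H).mpr hH
  obtain ⟨A, hA⟩ := exists_isMinimalNormal (G := H)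
  have hAcomm := hA.commute
  obtain ⟨p, hp, hAp⟩ := hA.exists_isPGroup hAcomm
  have := hA.prop.1
  refine ⟨A.map H.subtype, ?_, map_subtype_le _, fun h hh => ?_, ?_, p, hp, hAp.map _⟩
  · rw [Ne, map_eq_bot_iff_of_injective _ H.subtype_injective]
    exact hA.prop.2
  · exact le_normalizer_map _ ⟨⟨h, hh⟩, by simp [normalizer_eq_top_iff.mpr this], rfl⟩
  · rintro _ ⟨a, ha, rfl⟩ _ ⟨b, hb, rfl⟩
    exact (hAcomm a ha b hb).map H.subtype

end Subgroup

open MulAction Subgroup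

theorem IsPGroup.orbit_eq_compl_singleton {P α : Type*} [Group P] [MulAction P α] {p : ℕ}
    [Fact p.Prime] (hP : IsPGroup p P) (hcard : Nat.card α = p + 1) {x : α}
    (hfix : fixedPoints P α = {x}) {y : α} (hy : y ≠ x) : orbit P y = {x}ᶜ := by
  have : Finite α := Nat.finite_of_card_ne_zero (by omega)
  have hx : ∀ a : P, a • x = x := mem_fixedPoints.mp (hfix ▸ rfl)
  have hsub : orbit P y ⊆ {x}ᶜ := by
    rintro _ ⟨a, rfl⟩ h
    exact hy (by rw [← inv_smul_smul a y, show a • y = x from h, hx])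
  have hcompl : ({x}ᶜ : Set α).ncard = p := by
    rw [Set.ncard_compl, Set.ncard_singleton, hcard, Nat.add_sub_cancel]
  obtain ⟨n, hn⟩ := hP.card_orbit y
  rw [Nat.card_coe_set_eq] at hn
  have hn0 : n ≠ 0 := by
    rintro rfl
    obtain ⟨b, hb⟩ := Set.ncard_eq_one.mp hn
    refine hy (Set.mem_singleton_iff.mp (hfix ▸ mem_fixedPoints.mpr fun a => ?_))
    have h1 : a • y ∈ orbit P y := mem_orbit y a
    have h2 : y ∈ orbit P y := mem_orbit_self y
    rw [hb] at h1 h2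
    exact h1.trans h2.symm
  have hn1 : n ≤ 1 := by
    refine (Nat.pow_le_pow_iff_right (Fact.out : p.Prime).one_lt).mp ?_
    rw [pow_one, ← hn, ← hcompl]
    exact Set.ncard_le_ncard hsub
  exact Set.eq_of_subset_of_ncard_le hsub (by rw [hcompl, hn, show n = 1 by omega, pow_one])

namespace MulAction

variable {G α : Type*} [Group G] [MulAction G α]

theorem smul_eq_of_mem_orbit_of_forall_commute {C : Subgroup G} {a : G}
    (ha : ∀ c ∈ C, Commute a c) {y : α} (hy : a • y = y) {u : α} (hu : u ∈ orbit C y) :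
    a • u = u := by
  obtain ⟨c, rfl⟩ := hu
  change a • (c : G) • y = (c : G) • y
  rw [← mul_smul, (ha c c.2).eq, mul_smul, hy]

theorem eq_one_of_smul_eq_of_commute [FaithfulSMul G α] {M : Subgroup G} [IsPretransitive M α]
    (hcomm : ∀ a ∈ M, ∀ b ∈ M, Commute a b) {m : G} (hm : m ∈ M) {x : α} (hx : m • x = x) :
    m = 1 :=
  eq_of_smul_eq_smul fun u => by
    rw [one_smul]
    exact smul_eq_of_mem_orbit_of_forall_commute (hcomm m hm) hx (orbit_eq_univ M x ▸ trivial)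

theorem commute_of_mem_normalizer {C : Subgroup G} {g c : G} (hg : g ∈ normalizer (C : Set G))
    (hc : c ∈ C) {y : α} (hfree : ∀ c ∈ C, c • y = y → c = 1) (hgy : g • y = y)
    (hgc : g • c • y = c • y) : Commute g c := by
  have hconj : g * c * g⁻¹ ∈ C := (mem_normalizer_iff.mp hg c).mp hc
  have hgy' : g⁻¹ • y = y := inv_smul_eq_iff.mpr hgy.symm
  have h1 := hfree _ (C.mul_mem (C.inv_mem hc) hconj)
    (by simp only [mul_smul, hgy', hgc, inv_smul_smul])
  exact (eq_mul_inv_iff_mul_eq.mp (inv_mul_eq_one.mp h1)).symm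

theorem smul_eq_of_mem_orbit_of_mem_normalizer {C : Subgroup G} {g : G}
    (hg : g ∈ normalizer (C : Set G)) {y : α} (hfree : ∀ c ∈ C, c • y = y → c = 1)
    (hprime : (orbit C y).ncard.Prime) (hgy : g • y = y) {c : G} (hc : c ∈ C) (hcy : c • y ≠ y)
    (hgc : g • c • y = c • y) {u : α} (hu : u ∈ orbit C y) : g • u = u := by
  have hcard : Nat.card C = (orbit C y).ncard := by
    rw [← index_stabilizer, ← index_bot]
    congr 1
    exact ((eq_bot_iff_forall (stabilizer C y)).mpr fun c' hc' =>
      Subtype.ext (hfree _ c'.2 hc')).symm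
  have := Fact.mk hprime
  have hc1 : (⟨c, hc⟩ : C) ≠ 1 := fun h => hcy (by simp [show c = 1 from congrArg Subtype.val h])
  refine smul_eq_of_mem_orbit_of_forall_commute (fun c' hc' => ?_) hgy hu
  obtain ⟨k, hk⟩ := mem_zpowers_iff.mp (mem_zpowers_of_prime_card hcard hc1 (g' := ⟨c', hc'⟩))
  rw [show c' = c ^ k from congrArg Subtype.val hk.symm]
  exact (commute_of_mem_normalizer hg hc hfree hgy hgc).zpow_right k

theorem normal_inf_centralizer {M : Subgroup G} [M.Normal] [IsPretransitive M α]
    (hcomm : ∀ a ∈ M, ∀ b ∈ M, Commute a b) {x : α} {A : Subgroup G}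
    (hxA : stabilizer G x ≤ normalizer (A : Set G)) : (M ⊓ centralizer A).Normal := by
  have hcent := (normal_subgroupOf_iff (centralizer_le_normalizer (A : Set G))).mp inferInstance
  refine ⟨fun z hz γ => ?_⟩
  obtain ⟨m, hm⟩ := exists_smul_eq M x (γ • x)
  set h := (m : G)⁻¹ * γ
  have hh : h ∈ stabilizer G x := by
    rw [mem_stabilizer_iff, mul_smul, ← hm, Subgroup.smul_def, inv_smul_smul]
  have hzh : h * z * h⁻¹ ∈ M ⊓ centralizer A :=
    ⟨Normal.conj_mem inferInstance z hz.1 h, hcent z h hz.2 (hxA hh)⟩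
  have hγ : γ * z * γ⁻¹ = (m : G) * (h * z * h⁻¹) * (m : G)⁻¹ := by simp only [h]; group
  rwa [hγ, (hcomm _ m.2 _ hzh.1).eq, mul_inv_cancel_right]

theorem IsQuasiPreprimitive.isPretransitive_of_ne_bot [FaithfulSMul G α] [IsQuasiPreprimitive G α]
    {N : Subgroup G} [N.Normal] (hN : N ≠ ⊥) : IsPretransitive N α :=
  IsQuasiPreprimitive.isPretransitive_of_normal fun h => hN <| (eq_bot_iff_forall N).mpr
    fun n hn => eq_of_smul_eq_smul (α := α) fun u => by
      rw [one_smul]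
      exact mem_fixedPoints.mp (h ▸ Set.mem_univ u) ⟨n, hn⟩

theorem fixedPoints_eq_singleton_of_le_stabilizer [FaithfulSMul G α] [IsQuasiPreprimitive G α]
    {M : Subgroup G} [M.Normal] [IsPretransitive M α] (hcomm : ∀ a ∈ M, ∀ b ∈ M, Commute a b)
    {x : α} {A : Subgroup G} (hA : A ≠ ⊥) (hAx : A ≤ stabilizer G x)
    (hxA : stabilizer G x ≤ normalizer (A : Set G)) : fixedPoints A α = {x} := by
  refine Set.Subset.antisymm (fun w hw => ?_) fun w hw a => by
    rw [Set.mem_singleton_iff.mp hw, Subgroup.smul_def]; exact hAx a.2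
  have := normal_inf_centralizer hcomm hxA
  have hZ : M ⊓ centralizer A = ⊥ := by
    by_contra hZ
    have := IsQuasiPreprimitive.isPretransitive_of_ne_bot (α := α) hZ
    refine hA ((eq_bot_iff_forall _).mpr fun a ha => eq_of_smul_eq_smul (α := α) fun u => ?_)
    rw [one_smul]
    exact smul_eq_of_mem_orbit_of_forall_commute
      (fun z (hz : z ∈ M ⊓ centralizer A) => mem_centralizer_iff.mp hz.2 a ha)
      (hAx ha) (by rw [orbit_eq_univ]; trivial)
  obtain ⟨m, rfl⟩ := exists_smul_eq M x w
  have hmZ : (m : G) ∈ M ⊓ centralizer A := by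
    refine ⟨m.2, mem_centralizer_iff.mpr fun a ha => ?_⟩
    exact commute_of_mem_normalizer (by simp [normalizer_eq_top_iff.mpr ‹M.Normal›]) m.2
      (fun _ hc => eq_one_of_smul_eq_of_commute hcomm hc) (hAx ha)
      (mem_fixedPoints.mp hw ⟨a, ha⟩)
  rw [hZ, mem_bot] at hmZ
  rw [Subgroup.smul_def, hmZ, one_smul]
  exact Set.mem_singleton x

theorem eq_one_of_prime_card [FaithfulSMul G α] {M : Subgroup G} [M.Normal] [IsPretransitive M α]
    (hcomm : ∀ a ∈ M, ∀ b ∈ M, Commute a b) (hp : (Nat.card α).Prime) {g : G} {x y : α}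
    (hxy : x ≠ y) (hgx : g • x = x) (hgy : g • y = y) : g = 1 := by
  obtain ⟨c, rfl⟩ := exists_smul_eq M x y
  refine eq_of_smul_eq_smul (α := α) fun u => ?_
  rw [one_smul]
  exact smul_eq_of_mem_orbit_of_mem_normalizer (by simp [normalizer_eq_top_iff.mpr ‹M.Normal›])
    (fun _ hc => eq_one_of_smul_eq_of_commute hcomm hc) (by rwa [orbit_eq_univ, Set.ncard_univ])
    hgx c.2 (Ne.symm hxy) hgy (by rw [orbit_eq_univ]; trivial)

theorem exists_free_orbit_eq_compl_singleton [Finite G] [Group.IsSolvable G] [FaithfulSMul G α]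
    [IsQuasiPreprimitive G α] {M : Subgroup G} [M.Normal] [IsPretransitive M α]
    (hcomm : ∀ a ∈ M, ∀ b ∈ M, Commute a b) {p : ℕ} (hp : p.Prime) (hcard : Nat.card α = p + 1)
    {x : α} (hx : stabilizer G x ≠ ⊥) :
    ∃ A : Subgroup G, stabilizer G x ≤ normalizer (A : Set G) ∧
      ∀ y ≠ x, orbit A y = {x}ᶜ ∧ ∀ a ∈ A, a • y = y → a = 1 := by
  have := Fact.mk hp
  have : Finite α := Nat.finite_of_card_ne_zero (by omega)
  obtain ⟨A, hA, hAx, hxA, hAcomm, q, hq, hAq⟩ := exists_abelian_isPGroup_le_normalizer hx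
  have hfix := fixedPoints_eq_singleton_of_le_stabilizer hcomm hA hAx hxA
  obtain rfl : q = p := by
    have := Fact.mk hq
    have hmod := hAq.card_modEq_card_fixedPoints α
    rw [hfix, Nat.card_coe_set_eq, Set.ncard_singleton, hcard] at hmod
    exact (Nat.prime_dvd_prime_iff_eq hq hp).mp
      (Nat.modEq_zero_iff_dvd.mp (Nat.ModEq.add_right_cancel' 1 hmod))
  refine ⟨A, hxA, fun y hy => ?_⟩
  have horbit := hAq.orbit_eq_compl_singleton hcard hfix hy
  refine ⟨horbit, fun a ha hay => eq_of_smul_eq_smul (α := α) fun u => ?_⟩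
  rw [one_smul]
  by_cases hu : u = x
  · rw [hu]; exact hAx ha
  · exact smul_eq_of_mem_orbit_of_forall_commute (hAcomm a ha) hay (horbit ▸ hu)

theorem eq_one_of_card_eq_prime_add_one [Finite G] [Group.IsSolvable G] [FaithfulSMul G α]
    [IsQuasiPreprimitive G α] {M : Subgroup G} [M.Normal] [IsPretransitive M α]
    (hcomm : ∀ a ∈ M, ∀ b ∈ M, Commute a b) {p : ℕ} (hp : p.Prime) (hcard : Nat.card α = p + 1)
    {g : G} {x y z : α} (hxy : x ≠ y) (hxz : x ≠ z) (hyz : y ≠ z) (hgx : g • x = x)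
    (hgy : g • y = y) (hgz : g • z = z) : g = 1 := by
  have : Finite α := Nat.finite_of_card_ne_zero (by omega)
  by_contra hg
  have hx : stabilizer G x ≠ ⊥ := fun h => hg (mem_bot.mp (h ▸ mem_stabilizer_iff.mpr hgx))
  obtain ⟨A, hxA, hA⟩ := exists_free_orbit_eq_compl_singleton hcomm hp hcard hx
  obtain ⟨horbit, hfree⟩ := hA y (Ne.symm hxy)
  obtain ⟨c, hcy⟩ : z ∈ orbit A y := horbit ▸ Ne.symm hxz
  change (c : G) • y = z at hcy
  refine hg (eq_of_smul_eq_smul (α := α) fun u => ?_)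
  rw [one_smul]
  by_cases hu : u = x
  · rw [hu]; exact hgx
  · refine smul_eq_of_mem_orbit_of_mem_normalizer (hxA hgx) hfree ?_ hgy c.2 (hcy ▸ hyz.symm)
      (hcy ▸ hgz) (horbit ▸ hu)
    rwa [horbit, Set.ncard_compl, Set.ncard_singleton, hcard, Nat.add_sub_cancel]

end MulAction

/-- Lemma 2.7 (first part): if `(G, Ω)` is primitive solvable of degree 7 or 8, then no
nonidentity element of `G` fixes a 3-element subset of `Ω` pointwise. -/
theorem stmt_15 {Ω : Type*} [Fintype Ω] (G : Subgroup (Equiv.Perm Ω))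
    (hsolv : IsSolvable G) (hprim : IsPrimitivePermGroup Ω G)
    (hcard : Fintype.card Ω = 7 ∨ Fintype.card Ω = 8) :
    ∀ Δ : Set Ω, Δ.ncard = 3 →
      ∀ g : G, (∀ x ∈ Δ, (g : Equiv.Perm Ω) x = x) → g = 1 := by
  have : Group.IsSolvable G := hsolv
  intro Δ hΔ g hg
  obtain ⟨x, y, z, hxy, hxz, hyz, rfl⟩ := Set.ncard_eq_three.mp hΔ
  have : IsPreprimitive G Ω := { hprim.1 with isTrivialBlock_of_isBlock := hprim.2 _ }
  rcases eq_or_ne (⊤ : Subgroup G) ⊥ with hG | hG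
  · exact (eq_bot_iff_forall _).mp hG g trivial
  obtain ⟨M, hM, -, hMn, hMcomm, -⟩ := exists_abelian_isPGroup_le_normalizer hG
  have : M.Normal := normalizer_eq_top_iff.mp (top_le_iff.mp hMn)
  have : IsPretransitive M Ω := IsQuasiPreprimitive.isPretransitive_of_ne_bot hM
  rw [← Nat.card_eq_fintype_card] at hcard
  rcases hcard with h7 | h8
  · exact eq_one_of_prime_card hMcomm (h7 ▸ by norm_num) hxy (hg x (by simp)) (hg y (by simp))
  · exact eq_one_of_card_eq_prime_add_one hMcomm (p := 7) (by norm_num) h8 hxy hxz hyz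
      (hg x (by simp)) (hg y (by simp)) (hg z (by simp))
end

section
/- Let Ω = F × F where F = {1, 2, 3, 4}, and let G be the group of all permutations of Ω of the form (i, j) ↦ (σ(i), τ_i(j)), where σ and each τ_i (i ∈ F) are permutations of F (i.e., G is the wreath product S₄ ≀ S₄ in its imprimitive action on 16 points, with the second coordinate as blocks indexed by the first). Then for every subset Δ of Ω, the setwise stabilizer of Δ in G is not nilpotent. -/
/-!
Subgroups of nilpotent groups are nilpotent, and a symmetric group of degree at least 3 is not,
its centre being trivial; so it suffices to embed such a group in the stabilizer of `Δ`. If some fibre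
`{j | (i, j) ∈ Δ}` does not have exactly two points, then three points of that fibre lie all
inside or all outside `Δ`, and the permutations of those points, applied within fibre `i` only,
fix `Δ`. Otherwise all fibres have the same size, so a fibrewise permutation of `F × F` carries
`Δ` to `F × S`, and the conjugates of the permutations `σ × id`, which fix `F × S`, form a copy of
`Sym(F)` fixing `Δ`.
-/

open Pointwise

theorem Group.isNilpotent_of_injective {H K : Type*} [Group H] [Group K] [IsNilpotent K]
    (f : H →* K) (hf : Function.Injective f) : IsNilpotent H :=
  nilpotent_of_mulEquiv (MonoidHom.ofInjective hf).symm

theorem MulAction.not_isNilpotent_stabilizer_of_injective {M X H : Type*} [Group M]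
    [MulAction M X] [Group H] {G : Subgroup M} {x : X} (f : H →* M)
    (hf : Function.Injective f) (hfG : ∀ h, f h ∈ G) (hfx : ∀ h, f h ∈ stabilizer M x)
    (hH : ¬ Group.IsNilpotent H) : ¬ Group.IsNilpotent (stabilizer G x) := by
  intro _
  refine hH (Group.isNilpotent_of_injective
    ((f.codRestrict G hfG).codRestrict (stabilizer G x) hfx) fun _ _ hh => hf ?_)
  exact congrArg (fun g : stabilizer G x => ((g : G) : M)) hh

open Finset in
theorem Finset.exists_perm_smul_eq_of_card_eq {β : Type*} [DecidableEq β] {s t : Finset β}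
    (h : #s = #t) : ∃ g : Equiv.Perm β, g • s = t := by
  have := Set.powersetCard.isPretransitive (α := β) (n := #t)
  obtain ⟨g, hg⟩ := MulAction.exists_smul_eq (Equiv.Perm β)
    (⟨s, h⟩ : Set.powersetCard β #t) ⟨t, rfl⟩
  exact ⟨g, congrArg Subtype.val hg⟩

namespace Equiv.Perm

variable {α β : Type*}

theorem center_eq_bot (h : 3 ≤ ENat.card α) : Subgroup.center (Perm α) = ⊥ := by
  classical
  refine (Subgroup.eq_bot_iff_forall _).2 fun g hg => ?_
  ext x
  change g x = x
  by_contra hgx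
  obtain ⟨z, hzx, hzg⟩ := ENat.exists_ne_ne_of_three_le h x (g x)
  have hcomm := congrArg (· x) (Subgroup.mem_center_iff.1 hg (swap x z))
  simp only [Perm.mul_apply, swap_apply_left, swap_apply_of_ne_of_ne hgx hzg.symm] at hcomm
  exact hzx (g.injective hcomm).symm

theorem not_isNilpotent (h : 3 ≤ ENat.card α) : ¬ Group.IsNilpotent (Perm α) := by
  intro _
  have : Nontrivial α := (ENat.one_lt_card_iff_nontrivial α).1 (lt_of_lt_of_le (by norm_num) h)
  exact Group.IsNilpotent.center_ne_bot _ (center_eq_bot h)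

variable (α β)

@[simps]
def prodCongrRightHom : (α → Perm β) →* Perm (α × β) where
  toFun := Equiv.prodCongrRight
  map_one' := rfl
  map_mul' _ _ := rfl

@[simps]
def prodCongrReflRightHom : Perm α →* Perm (α × β) where
  toFun σ := σ.prodCongr (Equiv.refl β)
  map_one' := rfl
  map_mul' _ _ := rfl

variable {α β}

theorem prodCongrRightHom_injective : Function.Injective (prodCongrRightHom α β) :=
  fun _ _ h => funext fun a => Equiv.ext fun b => congrArg (fun g => (g (a, b)).2) h

theorem prodCongrReflRightHom_injective [Nonempty β] :
    Function.Injective (prodCongrReflRightHom α β) :=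
  fun _ _ h => Equiv.ext fun a => congrArg (fun g => (g (a, Classical.arbitrary β)).1) h

end Equiv.Perm

section WreathProduct

open Equiv Equiv.Perm MulAction Finset

variable {α β : Type*} {G : Subgroup (Perm (α × β))} {Δ : Set (α × β)}

theorem not_isNilpotent_stabilizer_of_row_const (hG : ∀ σ τ, prodShear σ τ ∈ G) (a : α)
    {t : Set β} (ht : 3 ≤ ENat.card t) (hΔ : ∀ b ∈ t, ∀ b' ∈ t, ((a, b) ∈ Δ ↔ (a, b') ∈ Δ)) :
    ¬ Group.IsNilpotent (stabilizer G Δ) := by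
  classical
  refine not_isNilpotent_stabilizer_of_injective
    ((prodCongrRightHom α β).comp ((MonoidHom.mulSingle _ a).comp ofSubtype))
    (prodCongrRightHom_injective.comp ((Pi.mulSingle_injective a).comp ofSubtype_injective))
    (fun _ => hG 1 _) (fun g => mem_stabilizer_set.2 ?_) (not_isNilpotent ht)
  rintro ⟨a', b⟩
  by_cases ha : a' = a
  · subst ha
    by_cases hb : b ∈ t
    · simpa [ofSubtype_apply_of_mem g hb] using hΔ _ (g ⟨b, hb⟩).2 b hb
    · simp [ofSubtype_apply_of_not_mem g hb]
  · simp [Pi.mulSingle_eq_of_ne ha]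

theorem not_isNilpotent_stabilizer_preimage_univ_prod [Nonempty β]
    (hG : ∀ σ τ, prodShear σ τ ∈ G) (hα : 3 ≤ ENat.card α) (e : α → Perm β) (S : Set β) :
    ¬ Group.IsNilpotent (stabilizer G (prodCongrRight e ⁻¹' Set.univ ×ˢ S)) := by
  have he : prodCongrRightHom α β e ∈ G := hG 1 e
  refine not_isNilpotent_stabilizer_of_injective
    ((MulAut.conj (prodCongrRightHom α β e)⁻¹).toMonoidHom.comp (prodCongrReflRightHom α β))
    ((MulAut.conj _).injective.comp prodCongrReflRightHom_injective)
    (fun σ => ?_) (fun σ => mem_stabilizer_set.2 ?_) (not_isNilpotent hα)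
  · exact mul_mem (mul_mem (inv_mem he) (hG σ 1)) (by simpa using he)
  · rintro ⟨a, b⟩
    simp

theorem not_isNilpotent_stabilizer_of_card_row_eq [Fintype β] [DecidableEq β] [Nonempty β]
    [DecidablePred (· ∈ Δ)] (hG : ∀ σ τ, prodShear σ τ ∈ G) (hα : 3 ≤ ENat.card α) (a₀ : α)
    (hrow : ∀ a, #{b | (a, b) ∈ Δ} = #{b | (a₀, b) ∈ Δ}) :
    ¬ Group.IsNilpotent (stabilizer G Δ) := by
  choose e he using fun a => exists_perm_smul_eq_of_card_eq (hrow a)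
  have hΔ : Δ = prodCongrRight e ⁻¹' Set.univ ×ˢ ↑({b | (a₀, b) ∈ Δ} : Finset β) := by
    ext ⟨a, b⟩
    rw [Set.mem_preimage, prodCongrRight_apply, Set.mem_prod, Finset.mem_coe, ← he a,
      ← Perm.smul_def, smul_mem_smul_finset_iff]
    simp
  rw [hΔ]
  exact not_isNilpotent_stabilizer_preimage_univ_prod hG hα e _

end WreathProduct

/-- Example 3.4: in the imprimitive wreath product `S₄ ≀ S₄` acting on `F × F` with
`F = {1,2,3,4}` (permutations of the form `(i, j) ↦ (σ i, τ_i j)`), no subset of `F × F`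
has a nilpotent setwise stabilizer. -/
theorem stmt_17 (G : Subgroup (Equiv.Perm (Fin 4 × Fin 4)))
    (hG : ∀ g : Equiv.Perm (Fin 4 × Fin 4), g ∈ G ↔
      ∃ (σ : Equiv.Perm (Fin 4)) (τ : Fin 4 → Equiv.Perm (Fin 4)),
        ∀ p : Fin 4 × Fin 4, g p = (σ p.1, τ p.1 p.2)) :
    ∀ Δ : Set (Fin 4 × Fin 4), ¬ Group.IsNilpotent (MulAction.stabilizer G Δ) := by
  intro Δ
  open Finset in
  have hshear : ∀ σ τ, Equiv.prodShear σ τ ∈ G := fun σ τ => (hG _).2 ⟨σ, τ, fun _ => rfl⟩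
  have hcard : (3 : ℕ∞) ≤ ENat.card (Fin 4) := by
    rw [ENat.card_eq_coe_fintype_card, Fintype.card_fin]; norm_num
  classical
  by_cases hrow : ∀ i, #{j | (i, j) ∈ Δ} = 2
  · exact not_isNilpotent_stabilizer_of_card_row_eq hshear hcard 0 fun i => (hrow i).trans (hrow 0).symm
  push Not at hrow
  obtain ⟨i, hi⟩ := hrow
  have hsum : #{j | (i, j) ∈ Δ} + #{j | (i, j) ∉ Δ} = 4 := card_filter_add_card_filter_not _
  rcases (by omega : 3 ≤ #{j | (i, j) ∈ Δ} ∨ 3 ≤ #{j | (i, j) ∉ Δ}) with h | h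
  · exact not_isNilpotent_stabilizer_of_row_const hshear i (t := ↑({j | (i, j) ∈ Δ} : Finset _))
      (by simpa using h) (by simp_all)
  · exact not_isNilpotent_stabilizer_of_row_const hshear i (t := ↑({j | (i, j) ∉ Δ} : Finset _))
      (by simpa using h) (by simp_all)
end

section
/- Let F = GF(8) be the field with 8 elements and let G be the subgroup of the symmetric group on F consisting of all maps x ↦ a·φ(x) + b with a ∈ F, a ≠ 0, b ∈ F, and φ a field automorphism of F (so G is the affine semilinear group AΓL(1,8) of order 168). Then every subset Δ of F is setwise stabilized by some element of G of order 3. -/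
open Pointwise

/-- Concrete model of `GF(8)`: bitmasks `0..7` of polynomials over `GF(2)` mod `x³+x+1`. -/
def F8 := Fin 8

instance : DecidableEq F8 := instDecidableEqFin 8
instance : Fintype F8 := Fin.fintype 8

namespace F8

def xt (n : ℕ) : ℕ := if n &&& 4 = 0 then n <<< 1 else ((n ^^^ 4) <<< 1) ^^^ 3

def mulNat (a b : ℕ) : ℕ :=
  (if b &&& 1 = 0 then 0 else a) ^^^
  (if b &&& 2 = 0 then 0 else xt a) ^^^
  (if b &&& 4 = 0 then 0 else xt (xt a))

def add : F8 → F8 → F8 := fun a b => ⟨(a.val ^^^ b.val) % 8, Nat.mod_lt _ (by norm_num)⟩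
def mul : F8 → F8 → F8 := fun a b => ⟨mulNat a.val b.val % 8, Nat.mod_lt _ (by norm_num)⟩

instance : Add F8 := ⟨add⟩
instance : Mul F8 := ⟨mul⟩
instance : Zero F8 := ⟨(⟨0, by norm_num⟩ : Fin 8)⟩
instance : One F8 := ⟨(⟨1, by norm_num⟩ : Fin 8)⟩
instance : Neg F8 := ⟨fun a => a⟩
instance : Inv F8 := ⟨fun a => mul a (mul (mul a a) (mul (mul a a) a))⟩

lemma h1 : ∀ a b c : F8, a + b + c = a + (b + c) := by decide
lemma h2 : ∀ a : F8, 0 + a = a := by decide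
lemma h3 : ∀ a : F8, a + 0 = a := by decide
lemma h4 : ∀ a b : F8, a + b = b + a := by decide
lemma h5 : ∀ a b c : F8, a * b * c = a * (b * c) := by decide
lemma h6 : ∀ a : F8, 1 * a = a := by decide
lemma h7 : ∀ a : F8, a * 1 = a := by decide
lemma h8 : ∀ a b : F8, a * b = b * a := by decide
lemma h9 : ∀ a b c : F8, a * (b + c) = a * b + a * c := by decide
lemma h10 : ∀ a b c : F8, (a + b) * c = a * c + b * c := by decide
lemma h11 : ∀ a : F8, 0 * a = 0 := by decide
lemma h12 : ∀ a : F8, a * 0 = 0 := by decide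
lemma h13 : ∀ a : F8, -a + a = 0 := by decide
lemma h14 : ∃ a b : F8, a ≠ b := by decide
lemma h15 : ∀ a : F8, a ≠ 0 → a * a⁻¹ = 1 := by decide
lemma h16 : (0 : F8)⁻¹ = 0 := by decide

instance instField : Field F8 where
  add_assoc := h1
  zero_add := h2
  add_zero := h3
  add_comm := h4
  mul_assoc := h5
  one_mul := h6
  mul_one := h7
  mul_comm := h8
  left_distrib := h9
  right_distrib := h10
  zero_mul := h11
  mul_zero := h12
  neg_add_cancel := h13
  exists_pair_ne := h14
  mul_inv_cancel := h15
  inv_zero := h16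
  nsmul := nsmulRec
  zsmul := zsmulRec
  qsmul := _
  nnqsmul := _

/-- `pw 0` is the Frobenius `x ↦ x²`, `pw 1` its square `x ↦ x⁴`. -/
def pw : Fin 2 → F8 → F8 := fun k x => if k = 0 then x * x else (x * x) * (x * x)

/-- Candidate semilinear maps `x ↦ a · pw k x + b`. -/
def gf (a b : F8) (k : Fin 2) (x : F8) : F8 := a * pw k x + b

set_option maxRecDepth 100000 in
set_option maxHeartbeats 1000000 in
/-- Every subset of `F8` is preserved by some nontrivial candidate whose cube is the
identity (hence an element of order 3). Verified by exhaustive computation. -/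
lemma cover : ∀ s : Finset F8, ∃ a b : F8, ∃ k : Fin 2, a ≠ 0 ∧
    (∀ x, gf a b k (gf a b k (gf a b k x)) = x) ∧ (∃ x, gf a b k x ≠ x) ∧
    ∀ x ∈ s, gf a b k x ∈ s := by decide

/-- The Frobenius automorphism of `F8` as a ring equivalence. -/
def fro : F8 ≃+* F8 where
  toFun := fun x => x * x
  invFun := fun x => (x * x) * (x * x)
  left_inv := by decide
  right_inv := by decide
  map_mul' := by decide
  map_add' := by decide

/-- `pw` as ring equivalences. -/
def pwE : Fin 2 → (F8 ≃+* F8) := fun k => if k = 0 then fro else fro.trans fro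

lemma pwE_eq : ∀ (k : Fin 2) (x : F8), pwE k x = pw k x := by decide

end F8

/-- In the affine semilinear group `AΓL(1,8)` of order 168 acting on `GF(8)` (all maps
`x ↦ a·φ(x) + b` with `a ≠ 0` and `φ` a field automorphism), every subset of `GF(8)` is
setwise stabilized by some element of order 3. -/
theorem stmt_18 (G : Subgroup (Equiv.Perm (GaloisField 2 3)))
    (hG : ∀ g : Equiv.Perm (GaloisField 2 3), g ∈ G ↔
      ∃ (a b : GaloisField 2 3) (φ : GaloisField 2 3 ≃+* GaloisField 2 3),
        a ≠ 0 ∧ ∀ x : GaloisField 2 3, g x = a * φ x + b) :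
    ∀ Δ : Set (GaloisField 2 3), ∃ g : Equiv.Perm (GaloisField 2 3),
      g ∈ G ∧ orderOf g = 3 ∧ g • Δ = Δ := by
  classical
  intro Δ
  haveI : Fintype (GaloisField 2 3) := Fintype.ofFinite _
  have hcard : Fintype.card F8 = Fintype.card (GaloisField 2 3) := by
    have h8 : Fintype.card (GaloisField 2 3) = 8 := by
      rw [← Nat.card_eq_fintype_card, GaloisField.card 2 3 (by norm_num)]
      norm_num
    have hF : Fintype.card F8 = 8 := rfl
    rw [h8, hF]
  let e : F8 ≃+* GaloisField 2 3 := FiniteField.ringEquivOfCardEq hcard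
  set s : Finset F8 := Finset.univ.filter (fun x => e x ∈ Δ) with hs_def
  obtain ⟨a, b, k, ha, hcube, ⟨x0, hx0⟩, hstab⟩ := F8.cover s
  have hginv : ∀ y : GaloisField 2 3,
      e (F8.gf a b k (e.symm (e (F8.gf a b k (e.symm (e (F8.gf a b k (e.symm y)))))))) = y := by
    intro y
    rw [RingEquiv.symm_apply_apply, RingEquiv.symm_apply_apply, hcube,
      RingEquiv.apply_symm_apply]
  let g : Equiv.Perm (GaloisField 2 3) :=
    ⟨fun y => e (F8.gf a b k (e.symm y)),
     fun y => e (F8.gf a b k (e.symm (e (F8.gf a b k (e.symm y))))),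
     fun y => hginv y, fun y => hginv y⟩
  have hgapp : ∀ y, g y = e (F8.gf a b k (e.symm y)) := fun _ => rfl
  have hgid : ∀ y, g (g (g y)) = y := by
    intro y
    rw [hgapp, hgapp, hgapp]
    exact hginv y
  have hΔ : ∀ z ∈ Δ, g z ∈ Δ := by
    intro z hz
    have h1 : e.symm z ∈ s := by
      simp only [hs_def, Finset.mem_filter, Finset.mem_univ, true_and,
        RingEquiv.apply_symm_apply]
      exact hz
    have h2 := hstab _ h1
    simp only [hs_def, Finset.mem_filter, Finset.mem_univ, true_and] at h2
    rwa [hgapp]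
  refine ⟨g, ?_, ?_, ?_⟩
  · refine (hG g).2 ⟨e a, e b, (e.symm.trans (F8.pwE k)).trans e, ?_, ?_⟩
    · intro h
      exact ha (e.injective (by rw [h, map_zero]))
    · intro x
      rw [hgapp]
      simp only [F8.gf, map_add, map_mul, RingEquiv.trans_apply, F8.pwE_eq]
  · haveI : Fact (Nat.Prime 3) := ⟨by norm_num⟩
    refine orderOf_eq_prime ?_ ?_
    · ext y
      have h3 : (g ^ 3) y = g (g (g y)) := by
        rw [pow_succ, pow_succ, pow_one]
        simp [Equiv.Perm.mul_apply]
      rw [h3, hgid]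
      rfl
    · intro h
      apply hx0
      have h1 : g (e x0) = e x0 := by rw [h]; rfl
      rw [hgapp, RingEquiv.symm_apply_apply] at h1
      exact e.injective h1
  · ext d
    constructor
    · rintro ⟨z, hz, rfl⟩
      simpa [Equiv.Perm.smul_def] using hΔ z hz
    · intro hd
      refine ⟨g (g d), hΔ _ (hΔ _ hd), ?_⟩
      simpa [Equiv.Perm.smul_def] using hgid d
end
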